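/- arXiv:2007.07726 — 8 statements merged into one kernel-verified Lean document; each statement's English description precedes it below -/
import Mathlib

section
/- Let σ > 0 and let (X₁, X₂) be a random vector in ℝ² on a probability space such that X₁ has the centered Gaussian law N(0,σ²) and X₁ is independent of X₂. Then for every continuously differentiable function f : ℝ² → ℝ which is bounded and has bounded partial derivatives, E[X₁ · f(X₁, X₂)] = σ² · E[∂₁f(X₁, X₂)], where ∂₁f denotes the partial derivative of f in its first variable. -/
open MeasureTheory ProbabilityTheory

/-- Partial derivative of `f : ℝ × ℝ → ℝ` in its first variable. -/
noncomputable def pderiv1 (f : ℝ × ℝ → ℝ) (p : ℝ × ℝ) : ℝ :=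
  deriv (fun y => f (y, p.2)) p.1

/-- Partial derivative of `f : ℝ × ℝ → ℝ` in its second variable. -/
noncomputable def pderiv2 (f : ℝ × ℝ → ℝ) (p : ℝ × ℝ) : ℝ :=
  deriv (fun y => f (p.1, y)) p.2

/-! The density `φ` of `N(μ, v)` satisfies `v φ' = -(x - μ) φ`, so integrating by parts,
`∫ (x - μ) g φ = -v ∫ g φ' = v ∫ g' φ`. Independence makes the law of `(X₁, X₂)` a product
measure, and Fubini applies this one-dimensional identity for each fixed value of `X₂`. -/

open Real
open scoped NNReal

lemma hasDerivAt_gaussianPDFReal (μ : ℝ) (v : ℝ≥0) (x : ℝ) :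
    HasDerivAt (gaussianPDFReal μ v) (-(x - μ) / v * gaussianPDFReal μ v x) x := by
  have hexp : HasDerivAt (fun x => -(x - μ) ^ 2 / (2 * v)) (-(2 * (x - μ)) / (2 * v)) x := by
    simpa using (((hasDerivAt_id x).sub_const μ).pow 2).neg.div_const (2 * (v : ℝ))
  rw [gaussianPDFReal_def]
  exact (hexp.exp.const_mul _).congr_deriv (by ring)

lemma integrable_gaussianReal_iff_integrable_pdf_mul {μ : ℝ} {v : ℝ≥0} (hv : v ≠ 0)
    {h : ℝ → ℝ} :
    Integrable h (gaussianReal μ v) ↔ Integrable fun x => gaussianPDFReal μ v x * h x := by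
  rw [gaussianReal_of_var_ne_zero _ hv, integrable_withDensity_iff_integrable_smul'
    (measurable_gaussianPDF _ _) (ae_of_all _ fun _ => gaussianPDF_lt_top)]
  simp [toReal_gaussianPDF]

theorem integral_sub_mul_gaussianReal (μ : ℝ) (v : ℝ≥0) {g : ℝ → ℝ} (hg : Differentiable ℝ g)
    (hgb : ∃ C, ∀ x, |g x| ≤ C) (hg'b : ∃ C, ∀ x, |deriv g x| ≤ C) :
    ∫ x, (x - μ) * g x ∂gaussianReal μ v = v * ∫ x, deriv g x ∂gaussianReal μ v := by
  rcases eq_or_ne v 0 with rfl | hv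
  · simp [gaussianReal_zero_var]
  obtain ⟨C, hC⟩ := hgb
  obtain ⟨C', hC'⟩ := hg'b
  set φ := gaussianPDFReal μ v
  have hgφ : Integrable fun x => g x * φ x :=
    (integrable_gaussianPDFReal μ v).bdd_mul hg.continuous.aestronglyMeasurable
      (ae_of_all _ hC)
  have hg'φ : Integrable fun x => deriv g x * φ x :=
    (integrable_gaussianPDFReal μ v).bdd_mul (measurable_deriv g).aestronglyMeasurable
      (ae_of_all _ hC')
  have hgφ' : Integrable fun x => g x * (-(x - μ) / v * φ x) := by
    have h : Integrable (fun x => (x - μ) * g x) (gaussianReal μ v) :=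
      (((memLp_id_gaussianReal 1).integrable le_rfl).sub (integrable_const μ)).mul_bdd
        hg.continuous.aestronglyMeasurable (ae_of_all _ hC)
    refine ((integrable_gaussianReal_iff_integrable_pdf_mul hv).mp h
      |>.const_mul (-(v : ℝ)⁻¹)).congr (ae_of_all _ fun x => ?_)
    simp only; ring
  have hibp := integral_mul_deriv_eq_deriv_mul_of_integrable
    (fun x _ => (hg x).hasDerivAt) (fun x _ => hasDerivAt_gaussianPDFReal μ v x) hgφ' hg'φ hgφ
  calc ∫ x, (x - μ) * g x ∂gaussianReal μ v = ∫ x, φ x * ((x - μ) * g x) :=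
        integral_gaussianReal_eq_integral_smul hv
    _ = -v * ∫ x, g x * (-(x - μ) / v * φ x) := by
        rw [← integral_const_mul]
        congr 1; ext x
        field_simp
    _ = v * ∫ x, φ x * deriv g x := by
        rw [hibp]; simp only [mul_comm (deriv g _)]; ring
    _ = v * ∫ x, deriv g x ∂gaussianReal μ v := by
        rw [integral_gaussianReal_eq_integral_smul hv]; rfl

lemma measurable_pderiv1 {f : ℝ × ℝ → ℝ} (hf : Continuous f) : Measurable (pderiv1 f) :=
  (measurable_deriv_with_param (f := fun y x => f (x, y)) (by fun_prop)).comp measurable_swap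

theorem integral_fst_sub_mul_gaussianReal_prod (μ : ℝ) (v : ℝ≥0) (ν : Measure ℝ)
    [IsFiniteMeasure ν] {f : ℝ × ℝ → ℝ} (hf : Continuous f)
    (hfx : ∀ y, Differentiable ℝ fun x => f (x, y))
    (hfb : ∃ C, ∀ p, |f p| ≤ C) (hfb1 : ∃ C, ∀ p, |pderiv1 f p| ≤ C) :
    ∫ p, (p.1 - μ) * f p ∂(gaussianReal μ v).prod ν
      = v * ∫ p, pderiv1 f p ∂(gaussianReal μ v).prod ν := by
  obtain ⟨C, hC⟩ := hfb
  obtain ⟨C₁, hC₁⟩ := hfb1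
  have hint : Integrable (fun p : ℝ × ℝ => (p.1 - μ) * f p) ((gaussianReal μ v).prod ν) :=
    ((((memLp_id_gaussianReal 1).integrable le_rfl).sub (integrable_const μ)).comp_fst ν).mul_bdd
      hf.aestronglyMeasurable (ae_of_all _ hC)
  have hint₁ : Integrable (pderiv1 f) ((gaussianReal μ v).prod ν) :=
    (integrable_const C₁).mono' (measurable_pderiv1 hf).aestronglyMeasurable (ae_of_all _ hC₁)
  rw [integral_prod_symm _ hint, integral_prod_symm _ hint₁, ← integral_const_mul]
  congr 1; ext y
  exact integral_sub_mul_gaussianReal μ v (hfx y) ⟨C, fun x => hC (x, y)⟩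
    ⟨C₁, fun x => hC₁ (x, y)⟩

theorem stein_lemma_2d_forward_general
    {Ω : Type*} [MeasurableSpace Ω] (P : Measure Ω) [IsProbabilityMeasure P]
    (σ : ℝ) (X₁ X₂ : Ω → ℝ) (hX₁ : Measurable X₁) (hX₂ : Measurable X₂)
    (hlaw : Measure.map X₁ P = gaussianReal 0 (Real.toNNReal (σ ^ 2)))
    (hindep : IndepFun X₁ X₂ P)
    (f : ℝ × ℝ → ℝ) (hf : ContDiff ℝ 1 f)
    (hfb : ∃ C, ∀ p, |f p| ≤ C)
    (hfb1 : ∃ C, ∀ p, |pderiv1 f p| ≤ C) :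
    ∫ ω, X₁ ω * f (X₁ ω, X₂ ω) ∂P = σ ^ 2 * ∫ ω, pderiv1 f (X₁ ω, X₂ ω) ∂P := by
  have hX : AEMeasurable (fun ω => (X₁ ω, X₂ ω)) P := (hX₁.prodMk hX₂).aemeasurable
  have hjoint :
      P.map (fun ω => (X₁ ω, X₂ ω)) = (gaussianReal 0 (σ ^ 2).toNNReal).prod (P.map X₂) := by
    rw [← hlaw]; exact hindep.map_prod_eq_prod_map_map hX₁.aemeasurable hX₂.aemeasurable
  have hfx : ∀ y, Differentiable ℝ fun x => f (x, y) := fun y =>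
    (hf.differentiable one_ne_zero).comp (differentiable_id.prodMk (differentiable_const y))
  rw [← integral_map hX (f := fun p => p.1 * f p)
      (continuous_fst.mul hf.continuous).aestronglyMeasurable,
    ← integral_map hX (measurable_pderiv1 hf.continuous).aestronglyMeasurable, hjoint]
  have h := integral_fst_sub_mul_gaussianReal_prod 0 (σ ^ 2).toNNReal (P.map X₂)
    hf.continuous hfx hfb hfb1
  simpa only [sub_zero, Real.coe_toNNReal _ (sq_nonneg σ)] using h

/-- **Two-dimensional Stein lemma, forward direction.**
If `X₁ ~ N(0, σ²)` and `X₁` is independent of `X₂`, then for every continuously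
differentiable `f : ℝ² → ℝ` which is bounded with bounded partial derivatives,
`E[X₁ f(X₁, X₂)] = σ² E[∂₁ f(X₁, X₂)]`. -/
theorem stein_lemma_2d_forward
    {Ω : Type*} [MeasurableSpace Ω] (P : Measure Ω) [IsProbabilityMeasure P]
    (σ : ℝ) (hσ : 0 < σ) (X₁ X₂ : Ω → ℝ) (hX₁ : Measurable X₁) (hX₂ : Measurable X₂)
    (hlaw : Measure.map X₁ P = gaussianReal 0 (Real.toNNReal (σ ^ 2)))
    (hindep : IndepFun X₁ X₂ P)
    (f : ℝ × ℝ → ℝ) (hf : ContDiff ℝ 1 f)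
    (hfb : ∃ C, ∀ p, |f p| ≤ C)
    (hfb1 : ∃ C, ∀ p, |pderiv1 f p| ≤ C)
    (hfb2 : ∃ C, ∀ p, |pderiv2 f p| ≤ C) :
    ∫ ω, X₁ ω * f (X₁ ω, X₂ ω) ∂P = σ ^ 2 * ∫ ω, pderiv1 f (X₁ ω, X₂ ω) ∂P :=
  stein_lemma_2d_forward_general P σ X₁ X₂ hX₁ hX₂ hlaw hindep f hf hfb hfb1
end

section
/- Let σ > 0 and let (X₁, X₂) be a random vector in ℝ² on a probability space with E[|X₁|] < ∞. Suppose that for every continuously differentiable function f : ℝ² → ℝ which is bounded and has bounded partial derivatives one has E[σ² · ∂₁f(X₁, X₂) − X₁ · f(X₁, X₂)] = 0. Then X₁ has the centered Gaussian law N(0,σ²) and X₁ is independent of X₂. -/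
open MeasureTheory ProbabilityTheory

/-!
Fix `s` and let `Φ(t) = E[exp(i(t X₁ + s X₂))]`. Applying the Stein identity to the plane waves
`cos(t x + s y)` and `sin(t x + s y)` gives `E[X₁ exp(i(t X₁ + s X₂))] = i σ² t Φ(t)`. Since `X₁` is
integrable, `Φ` may be differentiated under the integral sign, so `Φ' = -σ² t Φ`, whence
`Φ(t) = exp(-σ² t² / 2) E[exp(i s X₂)]`. With `s = 0` this is the characteristic function of
`N(0, σ²)`, and in general it says that the joint characteristic function of `(X₁, X₂)` factors.
-/

open Complex

lemma eq_cexp_mul_of_hasDerivAt {Φ : ℝ → ℂ} {c : ℂ}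
    (hΦ : ∀ t, HasDerivAt Φ (-(c * t) * Φ t) t) (t : ℝ) :
    Φ t = cexp (-(c * t ^ 2 / 2)) * Φ 0 := by
  have hderiv (u : ℝ) : HasDerivAt (fun u : ℝ => cexp (c * u ^ 2 / 2) * Φ u) 0 u := by
    have hq := ((((hasDerivAt_id (u : ℂ)).pow 2).const_mul c).div_const 2).comp_ofReal
    simp only [Pi.pow_apply, id_eq, Nat.cast_ofNat, Nat.add_one_sub_one, pow_one, mul_one] at hq
    exact (hq.cexp.mul (hΦ u)).congr_deriv (by ring)
  have hconst := is_const_of_deriv_eq_zero (fun u => (hderiv u).differentiableAt)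
    (fun u => (hderiv u).deriv) t 0
  simp only [ofReal_zero, ne_eq, OfNat.ofNat_ne_zero, not_false_eq_true, zero_pow, mul_zero,
    zero_div, Complex.exp_zero, one_mul] at hconst
  rw [← hconst, ← mul_assoc, ← Complex.exp_add, neg_add_cancel, Complex.exp_zero, one_mul]

section CharFun

variable {Ω : Type*} [MeasurableSpace Ω] {P : Measure Ω}

lemma integrable_cexp_ofReal_mul_I [IsFiniteMeasure P] {Y : Ω → ℝ} (hY : AEMeasurable Y P) :
    Integrable (fun ω => cexp (Y ω * I)) P := by
  refine .of_bound ?_ 1 (ae_of_all _ fun ω => (norm_exp_ofReal_mul_I _).le)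
  fun_prop

lemma MeasureTheory.Integrable.mul_cexp_ofReal_mul_I {f : Ω → ℂ} (hf : Integrable f P)
    {Y : Ω → ℝ} (hY : AEMeasurable Y P) : Integrable (fun ω => f ω * cexp (Y ω * I)) P :=
  hf.mul_bdd (by fun_prop) (ae_of_all _ fun ω => (norm_exp_ofReal_mul_I _).le)

lemma hasDerivAt_integral_cexp_mul_add [IsFiniteMeasure P] {X Y : Ω → ℝ} (hX : Integrable X P)
    (hY : AEMeasurable Y P) (t : ℝ) :
    HasDerivAt (fun t : ℝ => ∫ ω, cexp (↑(t * X ω + Y ω) * I) ∂P)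
      ((∫ ω, X ω * cexp (↑(t * X ω + Y ω) * I) ∂P) * I) t := by
  have hXm := hX.aemeasurable
  rw [← integral_mul_const]
  refine (hasDerivAt_integral_of_dominated_loc_of_deriv_le
    (F := fun u ω => cexp (↑(u * X ω + Y ω) * I))
    (F' := fun u ω => X ω * cexp (↑(u * X ω + Y ω) * I) * I) (bound := fun ω => ‖X ω‖)
    Filter.univ_mem (Filter.Eventually.of_forall fun u => ?_)
    (integrable_cexp_ofReal_mul_I (Y := fun ω => t * X ω + Y ω) (by fun_prop)) (by fun_prop)
    (ae_of_all _ fun ω u _ => ?_) hX.norm (ae_of_all _ fun ω u _ => ?_)).2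
  · fun_prop
  · simp only [norm_mul, norm_exp_ofReal_mul_I, norm_I, mul_one, norm_real, le_refl]
  · have h : HasDerivAt (fun u : ℝ => u * X ω + Y ω) (X ω) u := by
      simpa using ((hasDerivAt_id u).mul_const (X ω)).add_const (Y ω)
    exact ((h.ofReal_comp.mul_const I).cexp).congr_deriv (by ring)

lemma charFun_map_eq_integral {E : Type*} [NormedAddCommGroup E] [InnerProductSpace ℝ E]
    [MeasurableSpace E] [OpensMeasurableSpace E] {X : Ω → E} (hX : AEMeasurable X P) (t : E) :
    charFun (P.map X) t = ∫ ω, cexp (inner ℝ (X ω) t * I) ∂P := by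
  rw [charFun_apply, integral_map hX (by fun_prop)]

end CharFun

lemma pderiv1_comp_linear {g : ℝ → ℝ} (hg : Differentiable ℝ g) (t s : ℝ) (p : ℝ × ℝ) :
    pderiv1 (fun q => g (t * q.1 + s * q.2)) p = t * deriv g (t * p.1 + s * p.2) := by
  have h : HasDerivAt (fun y => t * y + s * p.2) t p.1 := by
    simpa using ((hasDerivAt_id p.1).const_mul t).add_const (s * p.2)
  exact ((hg _).hasDerivAt.comp p.1 h).deriv.trans (mul_comm _ _)

lemma pderiv2_comp_linear {g : ℝ → ℝ} (hg : Differentiable ℝ g) (t s : ℝ) (p : ℝ × ℝ) :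
    pderiv2 (fun q => g (t * q.1 + s * q.2)) p = s * deriv g (t * p.1 + s * p.2) := by
  have h : HasDerivAt (fun y => t * p.1 + s * y) s p.2 := by
    simpa using ((hasDerivAt_id p.2).const_mul s).const_add (t * p.1)
  exact ((hg _).hasDerivAt.comp p.2 h).deriv.trans (mul_comm _ _)

def SteinIdentity {Ω : Type*} [MeasurableSpace Ω] (P : Measure Ω) (σ : ℝ) (X₁ X₂ : Ω → ℝ) :
    Prop :=
  ∀ f : ℝ × ℝ → ℝ, ContDiff ℝ 1 f →
    (∃ C, ∀ p, |f p| ≤ C) → (∃ C, ∀ p, |pderiv1 f p| ≤ C) →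
    (∃ C, ∀ p, |pderiv2 f p| ≤ C) →
    ∫ ω, (σ ^ 2 * pderiv1 f (X₁ ω, X₂ ω) - X₁ ω * f (X₁ ω, X₂ ω)) ∂P = 0

namespace SteinIdentity

variable {Ω : Type*} [MeasurableSpace Ω] {P : Measure Ω} {σ : ℝ} {X₁ X₂ : Ω → ℝ}

lemma integral_comp_linear (h : SteinIdentity P σ X₁ X₂) {g : ℝ → ℝ} (hg : ContDiff ℝ 1 g)
    {C C' : ℝ} (hgC : ∀ x, |g x| ≤ C) (hg'C' : ∀ x, |deriv g x| ≤ C') (t s : ℝ) :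
    ∫ ω, (σ ^ 2 * (t * deriv g (t * X₁ ω + s * X₂ ω)) - X₁ ω * g (t * X₁ ω + s * X₂ ω)) ∂P
      = 0 := by
  have hgd : Differentiable ℝ g := hg.differentiable one_ne_zero
  have hpderiv_le (a x : ℝ) : |a * deriv g x| ≤ |a| * C' := by
    rw [abs_mul]
    exact mul_le_mul_of_nonneg_left (hg'C' x) (abs_nonneg a)
  have := h (fun q => g (t * q.1 + s * q.2)) (hg.comp (by fun_prop)) ⟨C, fun p => hgC _⟩
    ⟨|t| * C', fun p => by rw [pderiv1_comp_linear hgd]; exact hpderiv_le t _⟩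
    ⟨|s| * C', fun p => by rw [pderiv2_comp_linear hgd]; exact hpderiv_le s _⟩
  simpa only [pderiv1_comp_linear hgd] using this

lemma integral_mul_cexp [IsFiniteMeasure P] (h : SteinIdentity P σ X₁ X₂)
    (hX₁ : Integrable X₁ P) (hX₂ : AEMeasurable X₂ P) (t s : ℝ) :
    ∫ ω, X₁ ω * cexp (↑(t * X₁ ω + s * X₂ ω) * I) ∂P
      = (σ ^ 2 * t : ℝ) * I * ∫ ω, cexp (↑(t * X₁ ω + s * X₂ ω) * I) ∂P := by
  have hθ : AEMeasurable (fun ω => t * X₁ ω + s * X₂ ω) P := by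
    have := hX₁.aemeasurable
    fun_prop
  have hexp := integrable_cexp_ofReal_mul_I hθ
  have hmul : Integrable (fun ω => (X₁ ω : ℂ) * cexp (↑(t * X₁ ω + s * X₂ ω) * I)) P :=
    hX₁.ofReal.mul_cexp_ofReal_mul_I hθ
  have hint : Integrable (fun ω => (σ ^ 2 * t : ℝ) * I * cexp (↑(t * X₁ ω + s * X₂ ω) * I)
      - X₁ ω * cexp (↑(t * X₁ ω + s * X₂ ω) * I)) P :=
    (hexp.const_mul _).sub hmul
  suffices ∫ ω, ((σ ^ 2 * t : ℝ) * I * cexp (↑(t * X₁ ω + s * X₂ ω) * I)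
      - X₁ ω * cexp (↑(t * X₁ ω + s * X₂ ω) * I)) ∂P = 0 by
    rw [integral_sub (hexp.const_mul ((σ ^ 2 * t : ℝ) * I)) hmul, integral_const_mul] at this
    linear_combination -this
  -- The real and imaginary parts are the Stein identity for `cos` and `sin` respectively.
  apply Complex.ext
  · have hre := integral_re hint
    simp only [RCLike.re_to_complex] at hre
    rw [← hre]
    refine (integral_congr_ae (ae_of_all _ fun ω => ?_)).trans
      (h.integral_comp_linear (Real.contDiff_cos.of_le le_top) (C := 1) (C' := 1)
        Real.abs_cos_le_one (by simpa using Real.abs_sin_le_one) t s)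
    simp only [sub_re, mul_re, mul_im, I_re, I_im, ofReal_re, ofReal_im, exp_ofReal_mul_I_re,
      exp_ofReal_mul_I_im, Real.deriv_cos']
    ring
  · have him := integral_im hint
    simp only [RCLike.im_to_complex] at him
    rw [← him]
    refine (integral_congr_ae (ae_of_all _ fun ω => ?_)).trans
      (h.integral_comp_linear (Real.contDiff_sin.of_le le_top) (C := 1) (C' := 1)
        Real.abs_sin_le_one (by simpa using Real.abs_cos_le_one) t s)
    simp only [sub_im, mul_im, mul_re, I_re, I_im, ofReal_re, ofReal_im, exp_ofReal_mul_I_re,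
      exp_ofReal_mul_I_im, Real.deriv_sin]
    ring

lemma integral_cexp_eq [IsProbabilityMeasure P] (h : SteinIdentity P σ X₁ X₂)
    (hX₁ : Integrable X₁ P) (hX₂ : AEMeasurable X₂ P) (t s : ℝ) :
    ∫ ω, cexp (↑(t * X₁ ω + s * X₂ ω) * I) ∂P
      = cexp (-(σ ^ 2 * t ^ 2 / 2)) * ∫ ω, cexp (↑(s * X₂ ω) * I) ∂P := by
  have hode (u : ℝ) : HasDerivAt (fun u : ℝ => ∫ ω, cexp (↑(u * X₁ ω + s * X₂ ω) * I) ∂P)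
      (-(σ ^ 2 * u) * ∫ ω, cexp (↑(u * X₁ ω + s * X₂ ω) * I) ∂P) u := by
    refine (hasDerivAt_integral_cexp_mul_add hX₁ (by fun_prop) u).congr_deriv ?_
    rw [h.integral_mul_cexp hX₁ hX₂, ofReal_mul, ofReal_pow]
    linear_combination (σ ^ 2 * u * ∫ ω, cexp (↑(u * X₁ ω + s * X₂ ω) * I) ∂P) * I_sq
  simpa using eq_cexp_mul_of_hasDerivAt hode t

end SteinIdentity

theorem stein_lemma_2d_converse_general
    {Ω : Type*} [MeasurableSpace Ω] (P : Measure Ω) [IsProbabilityMeasure P]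
    (σ : ℝ) (X₁ X₂ : Ω → ℝ) (hX₁ : Measurable X₁) (hX₂ : Measurable X₂)
    (hint : Integrable X₁ P)
    (hstein : ∀ f : ℝ × ℝ → ℝ, ContDiff ℝ 1 f →
      (∃ C, ∀ p, |f p| ≤ C) → (∃ C, ∀ p, |pderiv1 f p| ≤ C) →
      (∃ C, ∀ p, |pderiv2 f p| ≤ C) →
      ∫ ω, (σ ^ 2 * pderiv1 f (X₁ ω, X₂ ω) - X₁ ω * f (X₁ ω, X₂ ω)) ∂P = 0) :
    Measure.map X₁ P = gaussianReal 0 (Real.toNNReal (σ ^ 2)) ∧ IndepFun X₁ X₂ P := by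
  have hcf (t s : ℝ) := SteinIdentity.integral_cexp_eq hstein hint hX₂.aemeasurable t s
  have hlaw : P.map X₁ = gaussianReal 0 (σ ^ 2).toNNReal := by
    refine Measure.ext_of_charFun (funext fun t => ?_)
    rw [charFun_map_eq_integral hX₁.aemeasurable, charFun_gaussianReal]
    simpa [mul_comm, sq_nonneg] using hcf t 0
  refine ⟨hlaw, (indepFun_iff_charFun_prod hX₁.aemeasurable hX₂.aemeasurable).2 fun t => ?_⟩
  rw [charFun_map_eq_integral (by fun_prop), charFun_map_eq_integral hX₂.aemeasurable, hlaw,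
    charFun_gaussianReal]
  simpa [mul_comm, sq_nonneg] using hcf t.ofLp.1 t.ofLp.2

/-- **Two-dimensional Stein lemma, converse direction.**
If `E[|X₁|] < ∞` and `E[σ² ∂₁f(X₁,X₂) − X₁ f(X₁,X₂)] = 0` for every continuously
differentiable bounded `f : ℝ² → ℝ` with bounded partial derivatives, then
`X₁ ~ N(0, σ²)` and `X₁` is independent of `X₂`. -/
theorem stein_lemma_2d_converse
    {Ω : Type*} [MeasurableSpace Ω] (P : Measure Ω) [IsProbabilityMeasure P]
    (σ : ℝ) (hσ : 0 < σ) (X₁ X₂ : Ω → ℝ) (hX₁ : Measurable X₁) (hX₂ : Measurable X₂)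
    (hint : Integrable X₁ P)
    (hstein : ∀ f : ℝ × ℝ → ℝ, ContDiff ℝ 1 f →
      (∃ C, ∀ p, |f p| ≤ C) → (∃ C, ∀ p, |pderiv1 f p| ≤ C) →
      (∃ C, ∀ p, |pderiv2 f p| ≤ C) →
      ∫ ω, (σ ^ 2 * pderiv1 f (X₁ ω, X₂ ω) - X₁ ω * f (X₁ ω, X₂ ω)) ∂P = 0) :
    Measure.map X₁ P = gaussianReal 0 (Real.toNNReal (σ ^ 2)) ∧ IndepFun X₁ X₂ P :=
  stein_lemma_2d_converse_general P σ X₁ X₂ hX₁ hX₂ hint hstein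
end

section
/- Let σ > 0, let X be a random variable with the centered Gaussian law N(0,σ²), and let l : ℝ² → ℝ be continuously differentiable with bounded partial derivatives. Then the function f_l(x₁, x₂) := −σ⁻² ∫₀¹ (2√(t(1−t)))⁻¹ · E[X · l(√t x₁ + √(1−t) X, x₂)] dt satisfies the uniform bound sup_{(x₁,x₂)∈ℝ²} |f_l(x₁, x₂)| ≤ sup_{(x₁,x₂)∈ℝ²} |∂₁l(x₁, x₂)|. -/
open MeasureTheory ProbabilityTheory

/-- The Stein solution
`f_l(x₁,x₂) = −σ⁻² ∫₀¹ (2√(t(1−t)))⁻¹ E[X l(√t x₁ + √(1−t) X, x₂)] dt`. -/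
noncomputable def steinSol {Ω : Type*} [MeasurableSpace Ω] (P : Measure Ω)
    (X : Ω → ℝ) (σ : ℝ) (l : ℝ × ℝ → ℝ) : ℝ × ℝ → ℝ :=
  fun p => -(σ ^ 2)⁻¹ *
    ∫ t in (0:ℝ)..1, (2 * Real.sqrt (t * (1 - t)))⁻¹ *
      ∫ ω, X ω * l (Real.sqrt t * p.1 + Real.sqrt (1 - t) * X ω, p.2) ∂P

/-! Since `E[X] = 0`, the inner expectation equals
`E[X (l(√t x₁ + √(1−t) X, x₂) − l(√t x₁, x₂))]`, which the mean value inequality bounds by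
`√(1−t) · sup |∂₁l| · E[X²] = √(1−t) · sup |∂₁l| · σ²`. The factor `√(1−t)` cancels the
singularity of the weight at `t = 1`, leaving `∫₀¹ (2√t)⁻¹ dt = 1`. -/

open Real Set
open scoped NNReal

lemma ProbabilityTheory.HasLaw.integral_sq_of_gaussianReal_zero {Ω : Type*} [MeasurableSpace Ω]
    {P : Measure Ω} {X : Ω → ℝ} {v : ℝ≥0} (hX : HasLaw X (gaussianReal 0 v) P) :
    ∫ ω, X ω ^ 2 ∂P = v := by
  have hmean : P[X] = 0 := by simp [hX.integral_eq]
  rw [← variance_of_integral_eq_zero hX.aemeasurable hmean, hX.variance_eq,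
    variance_id_gaussianReal]

lemma abs_integral_mul_comp_affine_le {Ω : Type*} [MeasurableSpace Ω] {P : Measure Ω}
    [IsFiniteMeasure P] {X : Ω → ℝ} (hX : MemLp X 2 P) (hmean : P[X] = 0) {K : ℝ≥0}
    {φ : ℝ → ℝ} (hφ : LipschitzWith K φ) (a b : ℝ) :
    |∫ ω, X ω * φ (a + b * X ω) ∂P| ≤ K * |b| * ∫ ω, X ω ^ 2 ∂P := by
  have hbound : ∀ ω, ‖X ω * (φ (a + b * X ω) - φ a)‖ ≤ K * |b| * X ω ^ 2 := by
    intro ω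
    have hlip := hφ.dist_le_mul (a + b * X ω) a
    rw [dist_eq, dist_eq, add_sub_cancel_left, abs_mul] at hlip
    rw [norm_eq_abs, abs_mul, ← sq_abs (X ω)]
    calc |X ω| * |φ (a + b * X ω) - φ a| ≤ |X ω| * (K * (|b| * |X ω|)) := by gcongr
      _ = K * |b| * |X ω| ^ 2 := by ring
  have hdom : Integrable (fun ω => K * |b| * X ω ^ 2) P := hX.integrable_sq.const_mul _
  have hmeas : AEStronglyMeasurable (fun ω => X ω * (φ (a + b * X ω) - φ a)) P :=
    hX.1.mul ((hφ.continuous.comp_aestronglyMeasurable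
      (aestronglyMeasurable_const.add (hX.1.const_mul b))).sub aestronglyMeasurable_const)
  have hshift : ∫ ω, X ω * φ (a + b * X ω) ∂P = ∫ ω, X ω * (φ (a + b * X ω) - φ a) ∂P := by
    calc ∫ ω, X ω * φ (a + b * X ω) ∂P
        = ∫ ω, (X ω * (φ (a + b * X ω) - φ a) + X ω * φ a) ∂P := by
          simp only [mul_sub, sub_add_cancel]
      _ = ∫ ω, X ω * (φ (a + b * X ω) - φ a) ∂P + ∫ ω, X ω * φ a ∂P :=
          integral_add (hdom.mono' hmeas (ae_of_all _ hbound))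
            ((hX.integrable one_le_two).mul_const _)
      _ = ∫ ω, X ω * (φ (a + b * X ω) - φ a) ∂P := by
          rw [integral_mul_const, hmean, zero_mul, add_zero]
  rw [hshift, ← norm_eq_abs, ← integral_const_mul]
  exact norm_integral_le_of_norm_le hdom (ae_of_all _ hbound)

lemma lipschitzWith_fst_slice_of_abs_pderiv1_le {l : ℝ × ℝ → ℝ} (hl : Differentiable ℝ l)
    {C : ℝ} (hC : ∀ p, |pderiv1 l p| ≤ C) (y : ℝ) :
    LipschitzWith C.toNNReal (fun x => l (x, y)) := by
  refine lipschitzWith_of_nnnorm_deriv_le (by fun_prop) fun x => ?_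
  rw [← NNReal.coe_le_coe, coe_nnnorm]
  exact (hC (x, y)).trans (le_coe_toNNReal C)

lemma abs_intervalIntegral_inv_two_sqrt_mul_one_sub_mul_le {g : ℝ → ℝ} {M : ℝ}
    (hg : ∀ t ∈ Ioo (0:ℝ) 1, |g t| ≤ M * √(1 - t)) :
    |∫ t in (0:ℝ)..1, (2 * √(t * (1 - t)))⁻¹ * g t| ≤ M := by
  have hpointwise : ∀ᵐ t, t ∈ Ioc (0:ℝ) 1 →
      ‖(2 * √(t * (1 - t)))⁻¹ * g t‖ ≤ M / 2 * t ^ (-(1/2:ℝ)) := by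
    filter_upwards [Measure.ae_ne volume 1] with t ht1 ht
    have ht' : t ∈ Ioo (0:ℝ) 1 := ⟨ht.1, lt_of_le_of_ne ht.2 ht1⟩
    have hs : 0 < √(1 - t) := sqrt_pos.2 (sub_pos.2 ht'.2)
    have hst : 0 < √t := sqrt_pos.2 ht.1
    rw [norm_eq_abs, abs_mul, abs_of_nonneg (by positivity), sqrt_mul ht.1.le,
      rpow_neg ht.1.le, ← sqrt_eq_rpow]
    calc (2 * (√t * √(1 - t)))⁻¹ * |g t| ≤ (2 * (√t * √(1 - t)))⁻¹ * (M * √(1 - t)) := by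
          gcongr; exact hg t ht'
      _ = M / 2 * (√t)⁻¹ := by field_simp
  have hweight : ∫ t in (0:ℝ)..1, M / 2 * t ^ (-(1/2:ℝ)) = M := by
    rw [intervalIntegral.integral_const_mul, integral_rpow (Or.inl (by norm_num))]
    norm_num
  rw [← norm_eq_abs, ← hweight]
  exact intervalIntegral.norm_integral_le_of_norm_le zero_le_one hpointwise
    ((intervalIntegral.intervalIntegrable_rpow' (by norm_num)).const_mul _)

theorem steinSol_sup_bound_general
    {Ω : Type*} [MeasurableSpace Ω] (P : Measure Ω) [IsProbabilityMeasure P]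
    (σ : ℝ) (X : Ω → ℝ)
    (hlaw : Measure.map X P = gaussianReal 0 (Real.toNNReal (σ ^ 2)))
    (l : ℝ × ℝ → ℝ) (hl : ContDiff ℝ 1 l) :
    ∀ C : ℝ, (∀ p, |pderiv1 l p| ≤ C) → ∀ p, |steinSol P X σ l p| ≤ C := by
  intro C hC p
  have hC0 : 0 ≤ C := (abs_nonneg _).trans (hC p)
  have hgauss : HasGaussianLaw X P := by
    have : IsGaussian (P.map X) := hlaw ▸ inferInstance
    exact IsGaussian.hasGaussianLaw
  have hXlaw : HasLaw X (gaussianReal 0 (σ ^ 2).toNNReal) P := ⟨hgauss.aemeasurable, hlaw⟩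
  have hmean : P[X] = 0 := by simp [hXlaw.integral_eq]
  have hsq : ∫ ω, X ω ^ 2 ∂P = σ ^ 2 := by
    rw [hXlaw.integral_sq_of_gaussianReal_zero, coe_toNNReal _ (sq_nonneg σ)]
  have hlip := lipschitzWith_fst_slice_of_abs_pderiv1_le (hl.differentiable one_ne_zero) hC p.2
  have hinner : ∀ t ∈ Ioo (0:ℝ) 1,
      |∫ ω, X ω * l (√t * p.1 + √(1 - t) * X ω, p.2) ∂P| ≤ C * σ ^ 2 * √(1 - t) := by
    intro t _
    have h := abs_integral_mul_comp_affine_le hgauss.memLp_two hmean hlip (√t * p.1) (√(1 - t))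
    rwa [abs_of_nonneg (sqrt_nonneg _), coe_toNNReal C hC0, hsq, mul_right_comm] at h
  have houter := abs_intervalIntegral_inv_two_sqrt_mul_one_sub_mul_le hinner
  simp only [steinSol, abs_mul, abs_neg, abs_inv, abs_of_nonneg (sq_nonneg σ)]
  exact inv_mul_le_of_le_mul₀ (sq_nonneg σ) hC0 (by linarith)

/-- **First bound of Lemma `SolStein0`**: `sup |f_l| ≤ sup |∂₁ l|`, stated as: any
uniform bound on `∂₁ l` is a uniform bound on `f_l`. -/
theorem steinSol_sup_bound
    {Ω : Type*} [MeasurableSpace Ω] (P : Measure Ω) [IsProbabilityMeasure P]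
    (σ : ℝ) (hσ : 0 < σ) (X : Ω → ℝ) (hX : Measurable X)
    (hlaw : Measure.map X P = gaussianReal 0 (Real.toNNReal (σ ^ 2)))
    (l : ℝ × ℝ → ℝ) (hl : ContDiff ℝ 1 l)
    (hb1 : ∃ C, ∀ p, |pderiv1 l p| ≤ C) (hb2 : ∃ C, ∀ p, |pderiv2 l p| ≤ C) :
    ∀ C : ℝ, (∀ p, |pderiv1 l p| ≤ C) → ∀ p, |steinSol P X σ l p| ≤ C :=
  steinSol_sup_bound_general P σ X hlaw l hl
end

section
/- Let σ > 0, let X be a random variable with the centered Gaussian law N(0,σ²), and let l : ℝ² → ℝ be continuously differentiable with bounded partial derivatives. Then the function f_l(x₁, x₂) := −σ⁻² ∫₀¹ (2√(t(1−t)))⁻¹ · E[X · l(√t x₁ + √(1−t) X, x₂)] dt is differentiable in its first variable and satisfies sup_{(x₁,x₂)∈ℝ²} |∂₁f_l(x₁, x₂)| ≤ σ⁻¹ · √(2/π) · sup_{(x₁,x₂)∈ℝ²} |∂₁l(x₁, x₂)|. -/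
open MeasureTheory ProbabilityTheory

/-! Differentiating under both integrals, the chain rule produces a factor `√t` which cancels the
singularity of the kernel `(2√(t(1-t)))⁻¹` at `t = 0` and leaves `(2√(1-t))⁻¹`, whose integral
over `[0,1]` is `1`; hence `|∂₁f_l| ≤ σ⁻² sup|∂₁l| E|X|`, and `E|X| = σ√(2/π)`.
Domination of the undifferentiated integrand uses `E[X] = 0`:
`E[X l(√t x + √(1-t) X, x₂)] = E[X (l(√t x + √(1-t) X, x₂) - l(√t x, x₂))] = O(√(1-t))`,
which cancels the singularity of the kernel at `t = 1`. -/

open Real Set Filter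
open scoped NNReal

lemma integral_Ioi_mul_exp_neg_mul_sq {b : ℝ} (hb : 0 < b) :
    ∫ x in Ioi (0 : ℝ), x * exp (-b * x ^ 2) = (2 * b)⁻¹ := by
  have h := integral_rpow_mul_exp_neg_mul_rpow two_pos (show (-1 : ℝ) < 1 by norm_num) hb
  rw [show ((1 : ℝ) + 1) / 2 = 1 by norm_num, Real.Gamma_one,
    show -((1 : ℝ) + 1) / 2 = -1 by norm_num, rpow_neg_one] at h
  simp only [rpow_one, rpow_two] at h
  rw [h]
  ring

lemma integral_abs_gaussianReal (v : ℝ≥0) :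
    ∫ x, |x| ∂gaussianReal 0 v = √(2 * v / π) := by
  rcases eq_or_ne v 0 with rfl | hv
  · simp
  have hv' : (0 : ℝ) < v := by positivity
  rw [integral_gaussianReal_eq_integral_smul hv]
  calc ∫ x, gaussianPDFReal 0 v x • |x|
      = (√(2 * π * v))⁻¹ * ∫ x, |x| * exp (-(2 * (v : ℝ))⁻¹ * |x| ^ 2) := by
        rw [← integral_const_mul]
        congr 1 with x
        rw [gaussianPDFReal, smul_eq_mul, sq_abs, sub_zero]; ring_nf
    _ = (√(2 * π * v))⁻¹ * (2 * (2 * (2 * (v : ℝ))⁻¹)⁻¹) := by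
        rw [integral_comp_abs (f := fun x => x * exp (-(2 * (v : ℝ))⁻¹ * x ^ 2)),
          integral_Ioi_mul_exp_neg_mul_sq (by positivity)]
    _ = √(2 * v / π) := by
        rw [sqrt_div' _ pi_pos.le, sqrt_mul' _ hv'.le, sqrt_mul' _ pi_pos.le]
        field_simp
        rw [← sqrt_mul zero_le_two, mul_self_sqrt (by positivity)]

lemma inv_sqrt_eq_rpow {t : ℝ} (ht : 0 ≤ t) : (√t)⁻¹ = t ^ (-(1 / 2) : ℝ) := by
  rw [sqrt_eq_rpow, rpow_neg ht]

lemma intervalIntegrable_inv_two_mul_sqrt :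
    IntervalIntegrable (fun t => (2 * √t)⁻¹) volume 0 1 :=
  ((intervalIntegral.intervalIntegrable_rpow' (r := -(1 / 2)) (by norm_num)).const_mul 2⁻¹).congr
    fun t ht => by
      rw [mul_inv, inv_sqrt_eq_rpow (uIoc_of_le (zero_le_one (α := ℝ)) ▸ ht).1.le]

lemma intervalIntegrable_inv_two_mul_sqrt_one_sub :
    IntervalIntegrable (fun t => (2 * √(1 - t))⁻¹) volume 0 1 := by
  simpa using (intervalIntegrable_inv_two_mul_sqrt.comp_sub_left 1).symm

lemma integral_inv_two_mul_sqrt_one_sub : ∫ t in (0 : ℝ)..1, (2 * √(1 - t))⁻¹ = 1 := by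
  rw [intervalIntegral.integral_comp_sub_left (fun t => (2 * √t)⁻¹), sub_self, sub_zero,
    intervalIntegral.integral_congr fun t ht => by
      rw [mul_inv, inv_sqrt_eq_rpow (uIcc_of_le (zero_le_one (α := ℝ)) ▸ ht).1],
    intervalIntegral.integral_const_mul, integral_rpow (by norm_num)]
  norm_num

noncomputable def steinKernel (t : ℝ) : ℝ := (2 * √(t * (1 - t)))⁻¹

lemma measurable_steinKernel : Measurable steinKernel := by
  unfold steinKernel; fun_prop

lemma steinKernel_eq {t : ℝ} (ht : 0 ≤ t) :
    steinKernel t = (2 * √t)⁻¹ * (√(1 - t))⁻¹ := by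
  rw [steinKernel, sqrt_mul ht, mul_inv, mul_inv, mul_inv, mul_assoc]

lemma steinKernel_mul_sqrt {t : ℝ} (ht : 0 < t) :
    steinKernel t * √t = (2 * √(1 - t))⁻¹ := by
  rw [steinKernel_eq ht.le, mul_inv, mul_inv]
  field_simp

lemma abs_steinKernel_mul_sqrt_mul_le {t B y : ℝ} (ht : 0 < t) (hy : |y| ≤ B) :
    |steinKernel t * (√t * y)| ≤ (2 * √(1 - t))⁻¹ * B := by
  rw [← mul_assoc, steinKernel_mul_sqrt ht, abs_mul, abs_of_nonneg (by positivity)]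
  gcongr

lemma abs_steinKernel_mul_le {t A y : ℝ} (ht : 0 ≤ t) (hA : 0 ≤ A)
    (hy : |y| ≤ A * √(1 - t)) : |steinKernel t * y| ≤ (2 * √t)⁻¹ * A := by
  rw [steinKernel_eq ht, abs_mul, abs_of_nonneg (by positivity), mul_assoc]
  gcongr
  rcases (sqrt_nonneg (1 - t)).eq_or_lt with h | h
  · simpa [← h] using hA
  · rw [inv_mul_le_iff₀ h, mul_comm]; exact hy

lemma abs_integral_steinKernel_mul_sqrt_mul_le {J : ℝ → ℝ} {B : ℝ}
    (hJ : ∀ t ∈ Ioc (0 : ℝ) 1, |J t| ≤ B) :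
    |∫ t in (0 : ℝ)..1, steinKernel t * (√t * J t)| ≤ B := by
  have h := intervalIntegral.norm_integral_le_of_norm_le (μ := volume)
    (f := fun t => steinKernel t * (√t * J t)) zero_le_one
    (ae_of_all _ fun t ht => abs_steinKernel_mul_sqrt_mul_le ht.1 (hJ t ht))
    (intervalIntegrable_inv_two_mul_sqrt_one_sub.mul_const B)
  rwa [intervalIntegral.integral_mul_const, integral_inv_two_mul_sqrt_one_sub, one_mul] at h

lemma hasDerivAt_integral_steinKernel_mul {I J : ℝ → ℝ → ℝ}
    {A B x₀ : ℝ} (hI_meas : ∀ x, Measurable (I · x)) (hJ_meas : Measurable (J · x₀))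
    (hI : ∀ t ∈ Ioc (0 : ℝ) 1, |I t x₀| ≤ A * √(1 - t))
    (hJ : ∀ t ∈ Ioc (0 : ℝ) 1, ∀ x, |J t x| ≤ B)
    (hderiv : ∀ t ∈ Ioc (0 : ℝ) 1, ∀ x, HasDerivAt (I t) (√t * J t x) x) :
    HasDerivAt (fun x => ∫ t in (0 : ℝ)..1, steinKernel t * I t x)
      (∫ t in (0 : ℝ)..1, steinKernel t * (√t * J t x₀)) x₀ := by
  have hA : 0 ≤ A := by
    have h := (abs_nonneg _).trans (hI 2⁻¹ ⟨by norm_num, by norm_num⟩)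
    exact nonneg_of_mul_nonneg_left h (by norm_num)
  have hI_int : IntervalIntegrable (fun t => steinKernel t * I t x₀) volume 0 1 :=
    (intervalIntegrable_inv_two_mul_sqrt.mul_const A).mono_fun'
      (measurable_steinKernel.mul (hI_meas x₀)).aestronglyMeasurable <| by
        rw [uIoc_of_le zero_le_one]
        refine (ae_restrict_mem measurableSet_Ioc).mono fun t ht => ?_
        exact abs_steinKernel_mul_le ht.1.le hA (hI t ht)
  have hJ'_meas := measurable_steinKernel.mul (continuous_sqrt.measurable.mul hJ_meas)
  refine (intervalIntegral.hasDerivAt_integral_of_dominated_loc_of_deriv_le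
    (F' := fun x t => steinKernel t * (√t * J t x))
    (bound := fun t => (2 * √(1 - t))⁻¹ * B) univ_mem
    (Eventually.of_forall fun x => (measurable_steinKernel.mul (hI_meas x)).aestronglyMeasurable)
    hI_int hJ'_meas.aestronglyMeasurable ?_ ?_ ?_).2
  · refine ae_of_all _ fun t ht x _ => ?_
    rw [uIoc_of_le zero_le_one] at ht
    exact abs_steinKernel_mul_sqrt_mul_le ht.1 (hJ t ht x)
  · exact intervalIntegrable_inv_two_mul_sqrt_one_sub.mul_const B
  · refine ae_of_all _ fun t ht x _ => ?_
    rw [uIoc_of_le zero_le_one] at ht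
    exact (hderiv t ht x).const_mul _

section GaussianLaw

variable {Ω : Type*} [MeasurableSpace Ω] {P : Measure Ω} {X : Ω → ℝ} {μ : ℝ} {v : ℝ≥0}

lemma memLp_of_map_eq_gaussianReal (hX : AEMeasurable X P) (hlaw : P.map X = gaussianReal μ v)
    (p : ℝ≥0) : MemLp X p P :=
  (hlaw ▸ memLp_id_gaussianReal p : MemLp id p (P.map X)).comp_of_map hX

lemma integral_of_map_eq_gaussianReal (hX : AEMeasurable X P)
    (hlaw : P.map X = gaussianReal μ v) : ∫ ω, X ω ∂P = μ := by
  rw [← integral_id_gaussianReal (μ := μ) (v := v), ← hlaw]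
  exact (integral_map hX aestronglyMeasurable_id).symm

lemma integral_abs_of_map_eq_gaussianReal (hX : AEMeasurable X P)
    (hlaw : P.map X = gaussianReal 0 v) : ∫ ω, |X ω| ∂P = √(2 * v / π) := by
  rw [← integral_abs_gaussianReal, ← hlaw,
    integral_map hX continuous_abs.aestronglyMeasurable]

end GaussianLaw

section AffineComposition

variable {Ω : Type*} [MeasurableSpace Ω] {P : Measure Ω} {X : Ω → ℝ} {g : ℝ → ℝ} {C : ℝ}

lemma abs_sub_le_of_abs_deriv_le (hg : Differentiable ℝ g) (hC : ∀ y, |deriv g y| ≤ C)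
    (y z : ℝ) : |g y - g z| ≤ C * |y - z| := by
  simpa using convex_univ.norm_image_sub_le_of_norm_deriv_le (fun x _ => hg x) (fun x _ => hC x)
    (mem_univ z) (mem_univ y)

lemma abs_integral_mul_le_of_abs_le {φ : Ω → ℝ} (hX : Integrable X P) (hφ : ∀ ω, |φ ω| ≤ C) :
    |∫ ω, X ω * φ ω ∂P| ≤ C * ∫ ω, |X ω| ∂P := by
  rw [← integral_const_mul, ← Real.norm_eq_abs]
  refine norm_integral_le_of_norm_le (hX.norm.const_mul C) (ae_of_all _ fun ω => ?_)
  rw [Real.norm_eq_abs, abs_mul, mul_comm]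
  exact mul_le_mul_of_nonneg_right (hφ ω) (abs_nonneg _)

variable (hX : Measurable X) (hX1 : Integrable X P) (hX2 : Integrable (fun ω => X ω ^ 2) P)
  (hg : Differentiable ℝ g) (hC : ∀ y, |deriv g y| ≤ C)
include hX hX1 hX2 hg hC

lemma integrable_mul_comp_affine (a b x : ℝ) :
    Integrable (fun ω => X ω * g (a * x + b * X ω)) P := by
  have hgm := hg.continuous.measurable
  refine ((hX1.norm.mul_const |g (a * x)|).add (hX2.const_mul (C * |b|))).mono'
    (by fun_prop) (ae_of_all _ fun ω => ?_)
  have h := abs_sub_le_of_abs_deriv_le hg hC (a * x + b * X ω) (a * x)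
  rw [add_sub_cancel_left, abs_mul] at h
  simp only [Pi.add_apply, Real.norm_eq_abs, abs_mul, ← sq_abs (X ω)]
  calc |X ω| * |g (a * x + b * X ω)| ≤ |X ω| * (|g (a * x)| + C * (|b| * |X ω|)) := by
        gcongr; linarith [abs_sub_abs_le_abs_sub (g (a * x + b * X ω)) (g (a * x))]
    _ = _ := by ring

lemma abs_integral_mul_comp_affine_le_s6 (hmean : ∫ ω, X ω ∂P = 0) (a b x : ℝ) :
    |∫ ω, X ω * g (a * x + b * X ω) ∂P| ≤ C * |b| * ∫ ω, X ω ^ 2 ∂P := by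
  have hcentre : ∫ ω, X ω * g (a * x + b * X ω) ∂P
      = ∫ ω, X ω * (g (a * x + b * X ω) - g (a * x)) ∂P := by
    simp_rw [mul_sub]
    rw [integral_sub (integrable_mul_comp_affine hX hX1 hX2 hg hC a b x) (hX1.mul_const _),
      integral_mul_const, hmean, zero_mul, sub_zero]
  rw [hcentre, ← integral_const_mul, ← Real.norm_eq_abs]
  refine norm_integral_le_of_norm_le (hX2.const_mul _) (ae_of_all _ fun ω => ?_)
  have h := abs_sub_le_of_abs_deriv_le hg hC (a * x + b * X ω) (a * x)
  rw [add_sub_cancel_left, abs_mul] at h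
  rw [Real.norm_eq_abs, abs_mul, ← sq_abs (X ω)]
  calc |X ω| * |g (a * x + b * X ω) - g (a * x)| ≤ |X ω| * (C * (|b| * |X ω|)) := by gcongr
    _ = _ := by ring

lemma hasDerivAt_integral_mul_comp_affine (a b x : ℝ) :
    HasDerivAt (fun y => ∫ ω, X ω * g (a * y + b * X ω) ∂P)
      (a * ∫ ω, X ω * deriv g (a * x + b * X ω) ∂P) x := by
  rw [← integral_const_mul]
  refine (hasDerivAt_integral_of_dominated_loc_of_deriv_le
    (F' := fun y ω => a * (X ω * deriv g (a * y + b * X ω))) (bound := fun ω => |a| * (C * |X ω|))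
    univ_mem (Eventually.of_forall fun y => (integrable_mul_comp_affine hX hX1 hX2 hg hC a b y).1)
    (integrable_mul_comp_affine hX hX1 hX2 hg hC a b x)
    (by have := measurable_deriv g; fun_prop) (ae_of_all _ fun ω y _ => ?_)
    (hX1.norm.const_mul C |>.const_mul _) (ae_of_all _ fun ω y _ => ?_)).2
  · rw [Real.norm_eq_abs, abs_mul, abs_mul, mul_comm |X ω|]
    gcongr
    exact hC _
  · have hinner : HasDerivAt (fun y => a * y + b * X ω) a y := by
      simpa using ((hasDerivAt_id y).const_mul a).add_const (b * X ω)
    exact (((hg _).hasDerivAt.comp y hinner).const_mul (X ω)).congr_deriv (by ring)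

end AffineComposition

section SteinSolution

variable {Ω : Type*} [MeasurableSpace Ω] {P : Measure Ω} [SFinite P] {X : Ω → ℝ}
  {l : ℝ × ℝ → ℝ} {C : ℝ}

lemma hasDerivAt_steinSol_fst (hX : Measurable X) (hX1 : Integrable X P)
    (hX2 : Integrable (fun ω => X ω ^ 2) P) (hmean : ∫ ω, X ω ∂P = 0) (hl : ContDiff ℝ 1 l)
    (hC : ∀ p, |pderiv1 l p| ≤ C) (σ : ℝ) (p : ℝ × ℝ) :
    HasDerivAt (fun y => steinSol P X σ l (y, p.2))
      (-(σ ^ 2)⁻¹ * ∫ t in (0 : ℝ)..1, steinKernel t *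
        (√t * ∫ ω, X ω * pderiv1 l (√t * p.1 + √(1 - t) * X ω, p.2) ∂P)) p.1 := by
  set g : ℝ → ℝ := fun y => l (y, p.2)
  have hg : Differentiable ℝ g :=
    (hl.differentiable one_ne_zero).comp (differentiable_id.prodMk (differentiable_const _))
  have hgC : ∀ y, |deriv g y| ≤ C := fun y => hC (y, p.2)
  have hgm : Measurable g := hg.continuous.measurable
  have hg'm : Measurable (deriv g) := measurable_deriv g
  have hI_meas : ∀ x, Measurable fun t => ∫ ω, X ω * g (√t * x + √(1 - t) * X ω) ∂P :=
    fun x => (StronglyMeasurable.integral_prod_right'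
      (f := fun q : ℝ × Ω => X q.2 * g (√q.1 * x + √(1 - q.1) * X q.2)) (by fun_prop)).measurable
  have hJ_meas : Measurable fun t => ∫ ω, X ω * deriv g (√t * p.1 + √(1 - t) * X ω) ∂P :=
    (StronglyMeasurable.integral_prod_right'
      (f := fun q : ℝ × Ω => X q.2 * deriv g (√q.1 * p.1 + √(1 - q.1) * X q.2))
      (by fun_prop)).measurable
  have hI : ∀ t ∈ Ioc (0 : ℝ) 1, |∫ ω, X ω * g (√t * p.1 + √(1 - t) * X ω) ∂P|
      ≤ (C * ∫ ω, X ω ^ 2 ∂P) * √(1 - t) := fun t _ =>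
    (abs_integral_mul_comp_affine_le_s6 hX hX1 hX2 hg hgC hmean _ _ _).trans_eq <| by
      rw [abs_of_nonneg (sqrt_nonneg _)]; ring
  exact (hasDerivAt_integral_steinKernel_mul hI_meas hJ_meas hI
    (fun t _ x => abs_integral_mul_le_of_abs_le hX1 fun ω => hgC _)
    (fun t _ x => hasDerivAt_integral_mul_comp_affine hX hX1 hX2 hg hgC _ _ x)).const_mul _

lemma abs_pderiv1_steinSol_le (hX : Measurable X) (hX1 : Integrable X P)
    (hX2 : Integrable (fun ω => X ω ^ 2) P) (hmean : ∫ ω, X ω ∂P = 0) (hl : ContDiff ℝ 1 l)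
    (hC : ∀ p, |pderiv1 l p| ≤ C) (σ : ℝ) (p : ℝ × ℝ) :
    |pderiv1 (steinSol P X σ l) p| ≤ (σ ^ 2)⁻¹ * (C * ∫ ω, |X ω| ∂P) := by
  rw [pderiv1, (hasDerivAt_steinSol_fst hX hX1 hX2 hmean hl hC σ p).deriv, abs_mul, abs_neg,
    abs_inv, abs_of_nonneg (sq_nonneg σ)]
  gcongr
  exact abs_integral_steinKernel_mul_sqrt_mul_le fun t _ =>
    abs_integral_mul_le_of_abs_le hX1 fun ω => hC _

end SteinSolution

theorem steinSol_pderiv1_bound_general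
    {Ω : Type*} [MeasurableSpace Ω] (P : Measure Ω) [IsProbabilityMeasure P]
    (σ : ℝ) (hσ : 0 < σ) (X : Ω → ℝ) (hX : Measurable X)
    (hlaw : Measure.map X P = gaussianReal 0 (Real.toNNReal (σ ^ 2)))
    (l : ℝ × ℝ → ℝ) (hl : ContDiff ℝ 1 l)
    (hb1 : ∃ C, ∀ p, |pderiv1 l p| ≤ C) :
    (∀ p : ℝ × ℝ, DifferentiableAt ℝ (fun y => steinSol P X σ l (y, p.2)) p.1) ∧
    ∀ C : ℝ, (∀ p, |pderiv1 l p| ≤ C) →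
      ∀ p, |pderiv1 (steinSol P X σ l) p| ≤ σ⁻¹ * Real.sqrt (2 / Real.pi) * C := by
  have hX1 : Integrable X P :=
    memLp_one_iff_integrable.1 (memLp_of_map_eq_gaussianReal hX.aemeasurable hlaw 1)
  have hX2 : Integrable (fun ω => X ω ^ 2) P :=
    (memLp_of_map_eq_gaussianReal hX.aemeasurable hlaw 2).integrable_sq
  have hmean : ∫ ω, X ω ∂P = 0 := integral_of_map_eq_gaussianReal hX.aemeasurable hlaw
  have habs : ∫ ω, |X ω| ∂P = σ * √(2 / π) := by
    rw [integral_abs_of_map_eq_gaussianReal hX.aemeasurable hlaw,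
      coe_toNNReal _ (sq_nonneg σ), mul_div_right_comm, sqrt_mul' _ (sq_nonneg σ),
      sqrt_sq hσ.le, mul_comm]
  refine ⟨fun p => ?_, fun C hC p => ?_⟩
  · obtain ⟨C, hC⟩ := hb1
    exact (hasDerivAt_steinSol_fst hX hX1 hX2 hmean hl hC σ p).differentiableAt
  · refine (abs_pderiv1_steinSol_le hX hX1 hX2 hmean hl hC σ p).trans_eq ?_
    rw [habs]
    field_simp

/-- **Second bound of Lemma `SolStein0`**: `f_l` is differentiable in its first
variable and `sup |∂₁ f_l| ≤ σ⁻¹ √(2/π) sup |∂₁ l|`. -/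
theorem steinSol_pderiv1_bound
    {Ω : Type*} [MeasurableSpace Ω] (P : Measure Ω) [IsProbabilityMeasure P]
    (σ : ℝ) (hσ : 0 < σ) (X : Ω → ℝ) (hX : Measurable X)
    (hlaw : Measure.map X P = gaussianReal 0 (Real.toNNReal (σ ^ 2)))
    (l : ℝ × ℝ → ℝ) (hl : ContDiff ℝ 1 l)
    (hb1 : ∃ C, ∀ p, |pderiv1 l p| ≤ C) (hb2 : ∃ C, ∀ p, |pderiv2 l p| ≤ C) :
    (∀ p : ℝ × ℝ, DifferentiableAt ℝ (fun y => steinSol P X σ l (y, p.2)) p.1) ∧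
    ∀ C : ℝ, (∀ p, |pderiv1 l p| ≤ C) →
      ∀ p, |pderiv1 (steinSol P X σ l) p| ≤ σ⁻¹ * Real.sqrt (2 / Real.pi) * C :=
  steinSol_pderiv1_bound_general P σ hσ X hX hlaw l hl hb1
end

section
/- Let Z be an integrable real random variable. For x ≥ 0 define ψ⁺ₓ(y) := min{x, max{y, 0}} and E(x) := E[ψ⁺ₓ(x + Z)]. Then for all 0 ≤ x ≤ y, E(y) − E(x) = E[(y + Z) · 1_{−y < Z ≤ −x}] + (y − x) · P[Z > −x]. -/
/-!
Pointwise, `ψ⁺_y(y + z) − ψ⁺_x(x + z)` splits into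
`(y + z) 1_{−y < z ≤ −x} + (y − x) 1_{z > −x}` (a case check on the position of `z` relative to
`−y ≤ −x ≤ 0`). Every term is bounded, so the identity integrates term by term.
-/

open MeasureTheory Set

lemma min_max_add_sub_min_max_add {x y : ℝ} (hx : 0 ≤ x) (hxy : x ≤ y) (z : ℝ) :
    min y (max (y + z) 0) - min x (max (x + z) 0) =
      (if -y < z ∧ z ≤ -x then y + z else 0) + (Ioi (-x)).indicator (fun _ => y - x) z := by
  simp only [indicator_apply, mem_Ioi]
  grind

section

variable {Ω : Type*} [MeasurableSpace Ω] {P : Measure Ω} [IsFiniteMeasure P] {Z : Ω → ℝ}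

lemma integrable_min_max_add (hZ : Measurable Z) {c : ℝ} (hc : 0 ≤ c) :
    Integrable (fun ω => min c (max (c + Z ω) 0)) P :=
  .of_bound (by fun_prop) c <| .of_forall fun ω =>
    abs_le.2 ⟨(neg_nonpos.2 hc).trans (le_min hc (le_max_right _ _)), min_le_left _ _⟩

lemma integrable_ite_add (hZ : Measurable Z) {x y : ℝ} (hxy : x ≤ y) :
    Integrable (fun ω => if -y < Z ω ∧ Z ω ≤ -x then y + Z ω else 0) P := by
  refine .of_bound (Measurable.ite (measurableSet_Ioc.preimage hZ) (hZ.const_add y)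
    measurable_const).aestronglyMeasurable (y - x) (.of_forall fun ω => ?_)
  split_ifs with h
  · exact abs_le.2 ⟨by linarith [h.1], by linarith [h.2]⟩
  · simpa using hxy

end

theorem increment_identity_DerEq1_general
    {Ω : Type*} [MeasurableSpace Ω] (P : Measure Ω) [IsProbabilityMeasure P]
    (Z : Ω → ℝ) (hZm : Measurable Z) :
    ∀ x y : ℝ, 0 ≤ x → x ≤ y →
      (∫ ω, min y (max (y + Z ω) 0) ∂P) - (∫ ω, min x (max (x + Z ω) 0) ∂P) =
        (∫ ω, (if -y < Z ω ∧ Z ω ≤ -x then y + Z ω else 0) ∂P) +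
          (y - x) * (P {ω | -x < Z ω}).toReal := by
  intro x y hx hxy
  have hS : MeasurableSet (Z ⁻¹' Ioi (-x)) := measurableSet_Ioi.preimage hZm
  calc _ = ∫ ω, ((if -y < Z ω ∧ Z ω ≤ -x then y + Z ω else 0) +
          (Z ⁻¹' Ioi (-x)).indicator (fun _ => y - x) ω) ∂P := by
        rw [← integral_sub (integrable_min_max_add hZm (hx.trans hxy))
          (integrable_min_max_add hZm hx)]
        congr with ω
        exact min_max_add_sub_min_max_add hx hxy (Z ω)
    _ = _ := by
        rw [integral_add (integrable_ite_add hZm hxy) ((integrable_const _).indicator hS),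
          integral_indicator_const _ hS, smul_eq_mul, mul_comm, measureReal_def]
        rfl

/-- **Increment identity (DerEq1)** in the proof of Lemma `LemVarDen`:
for an integrable random variable `Z`, with `ψ⁺ₓ(w) = min{x, max{w,0}}` and
`E(x) = E[ψ⁺ₓ(x+Z)]`, for all `0 ≤ x ≤ y`,
`E(y) − E(x) = E[(y+Z) 1_{−y < Z ≤ −x}] + (y−x) P[Z > −x]`. -/
theorem increment_identity_DerEq1
    {Ω : Type*} [MeasurableSpace Ω] (P : Measure Ω) [IsProbabilityMeasure P]
    (Z : Ω → ℝ) (hZm : Measurable Z) (hZ : Integrable Z P) :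
    ∀ x y : ℝ, 0 ≤ x → x ≤ y →
      (∫ ω, min y (max (y + Z ω) 0) ∂P) - (∫ ω, min x (max (x + Z ω) 0) ∂P) =
        (∫ ω, (if -y < Z ω ∧ Z ω ≤ -x then y + Z ω else 0) ∂P) +
          (y - x) * (P {ω | -x < Z ω}).toReal :=
  increment_identity_DerEq1_general P Z hZm
end

section
/- Let Z be an integrable real random variable whose law has no atoms, i.e. P[Z = z₀] = 0 for every z₀ ∈ ℝ. For x ≥ 0 define ψ⁺ₓ(y) := min{x, max{y, 0}} and E(x) := E[ψ⁺ₓ(x + Z)]. Then E is differentiable at every x > 0 with E'(x) = P[Z > −x]. -/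
open MeasureTheory ProbabilityTheory Filter Topology

private lemma psi_lower (a b z : ℝ) (ha : 0 < a) (hab : a ≤ b) :
    (if -a < z then b - a else 0) ≤ min b (max (b + z) 0) - min a (max (a + z) 0) := by
  split_ifs with h <;> simp only [min_def, max_def] <;> split_ifs <;> linarith

private lemma psi_upper (a b z : ℝ) (ha : 0 < a) (hab : a ≤ b) :
    min b (max (b + z) 0) - min a (max (a + z) 0) ≤ (if -b < z then b - a else 0) := by
  split_ifs with h <;> simp only [min_def, max_def] <;> split_ifs <;> linarith

/-- **Differentiability of `E(x) = E[ψ⁺ₓ(x+Z)]`** (from the proof of Lemma `LemVarDen`):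
for an integrable random variable `Z` with atomless law, the function
`x ↦ E[min{x, max{x+Z, 0}}]` is differentiable at every `x > 0` with derivative
`P[Z > −x]`. -/
theorem deriv_E_plus
    {Ω : Type*} [MeasurableSpace Ω] (P : Measure Ω) [IsProbabilityMeasure P]
    (Z : Ω → ℝ) (hZm : Measurable Z) (hZ : Integrable Z P)
    (hatomless : ∀ z₀ : ℝ, P {ω | Z ω = z₀} = 0) :
    ∀ x : ℝ, 0 < x →
      HasDerivAt (fun x : ℝ => ∫ ω, min x (max (x + Z ω) 0) ∂P)
        ((P {ω | -x < Z ω}).toReal) x := by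
  set h : ℝ → ℝ := fun t => (P {ω | -t < Z ω}).toReal with hh
  set f : ℝ → ℝ := fun x => ∫ ω, min x (max (x + Z ω) 0) ∂P with hf
  -- integrability of the integrand
  have gint : ∀ x : ℝ, Integrable (fun ω => min x (max (x + Z ω) 0)) P := by
    intro x
    have hm : Measurable fun ω => min x (max (x + Z ω) 0) :=
      measurable_const.min ((hZm.const_add x).max measurable_const)
    refine (integrable_const |x|).mono' hm.aestronglyMeasurable ?_
    filter_upwards with ω
    rw [Real.norm_eq_abs, abs_le]
    constructor
    · have h1 : min x 0 ≤ min x (max (x + Z ω) 0) := min_le_min le_rfl (le_max_right _ _)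
      have h2 : -|x| ≤ min x 0 := by
        rcases le_total x 0 with hx | hx
        · rw [min_eq_left hx, abs_of_nonpos hx]; linarith
        · rw [min_eq_right hx]; simp [abs_nonneg]
      linarith
    · exact (min_le_left _ _).trans (le_abs_self x)
  -- continuity of h at every point
  have hcont : ∀ t : ℝ, Tendsto h (𝓝 t) (𝓝 (h t)) := by
    intro t
    rw [Metric.tendsto_nhds]
    intro ε hε
    obtain ⟨δ, hδ, hPδ⟩ :
        ∃ δ > 0, P {ω | -t - δ < Z ω ∧ Z ω < -t + δ} < ENNReal.ofReal ε := by
      set s : ℕ → Set Ω := fun n => {ω | -t - 1/(n+1) < Z ω ∧ Z ω < -t + 1/(n+1)} with hs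
      have hmeas : ∀ n, NullMeasurableSet (s n) P := fun n =>
        ((measurableSet_lt measurable_const hZm).inter
          (measurableSet_lt hZm measurable_const)).nullMeasurableSet
      have hanti : Antitone s := by
        intro m n hmn ω hω
        have hc : (m : ℝ) ≤ (n : ℝ) := Nat.cast_le.mpr hmn
        have h1 : (1 : ℝ)/(n+1) ≤ 1/(m+1) :=
          one_div_le_one_div_of_le (by positivity) (by linarith)
        exact ⟨by linarith [hω.1], by linarith [hω.2]⟩
      have hinter : (⋂ n, s n) = {ω | Z ω = -t} := by
        ext ω
        simp only [Set.mem_iInter, hs, Set.mem_setOf_eq]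
        constructor
        · intro hall
          by_contra hne
          have habs : 0 < |Z ω + t| := abs_pos.mpr (fun hc => hne (by linarith))
          obtain ⟨n, hn⟩ := exists_nat_one_div_lt habs
          have h1 := (hall n).1
          have h2 := (hall n).2
          have : |Z ω + t| < 1/(n+1) := abs_lt.mpr ⟨by linarith, by linarith⟩
          linarith
        · intro he n
          have hp : (0:ℝ) < 1/(n+1) := by positivity
          exact ⟨by rw [he]; linarith, by rw [he]; linarith⟩
      have hA : Tendsto (fun n : ℕ => P (s n)) atTop (𝓝 (P (⋂ n, s n))) :=
        tendsto_measure_iInter_atTop hmeas hanti ⟨0, measure_ne_top P _⟩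
      rw [hinter, hatomless (-t)] at hA
      obtain ⟨n, hn⟩ := (hA.eventually_lt_const (ENNReal.ofReal_pos.mpr hε)).exists
      exact ⟨1/(n+1), by positivity, hn⟩
    filter_upwards [Metric.ball_mem_nhds t hδ] with u hu
    rw [Metric.mem_ball, Real.dist_eq, abs_lt] at hu
    set S : Set Ω := {ω | -t - δ < Z ω ∧ Z ω < -t + δ} with hS
    have key : ∀ v w : ℝ, t - δ < v → v < t + δ → t - δ < w → w < t + δ →
        h v ≤ h w + (P S).toReal := by
      intro v w hv1 hv2 hw1 hw2
      have hsub : {ω | -v < Z ω} ⊆ {ω | -w < Z ω} ∪ S := by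
        intro ω hω
        by_cases hc : -w < Z ω
        · exact Or.inl hc
        · push_neg at hc
          have hω' : -v < Z ω := hω
          exact Or.inr ⟨by linarith, by linarith⟩
      have hle : P {ω | -v < Z ω} ≤ P {ω | -w < Z ω} + P S :=
        (measure_mono hsub).trans (measure_union_le _ _)
      have := ENNReal.toReal_mono
        (ENNReal.add_ne_top.mpr ⟨measure_ne_top P _, measure_ne_top P _⟩) hle
      rwa [ENNReal.toReal_add (measure_ne_top P _) (measure_ne_top P _)] at this
    have hPS : (P S).toReal < ε := by
      rw [← ENNReal.ofReal_toReal (measure_ne_top P S)] at hPδ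
      exact_mod_cast (ENNReal.ofReal_lt_ofReal_iff hε).mp hPδ
    rw [Real.dist_eq, abs_lt]
    constructor
    · have := key t u (by linarith) (by linarith) (by linarith) (by linarith)
      linarith
    · have := key u t (by linarith) (by linarith) (by linarith) (by linarith)
      linarith
  -- the two-sided increment bounds
  have hbound : ∀ a b : ℝ, 0 < a → a ≤ b →
      (b - a) * h a ≤ f b - f a ∧ f b - f a ≤ (b - a) * h b := by
    intro a b ha hab
    have hAa : MeasurableSet {ω | -a < Z ω} := measurableSet_lt measurable_const hZm
    have hAb : MeasurableSet {ω | -b < Z ω} := measurableSet_lt measurable_const hZm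
    have hdiff : f b - f a = ∫ ω, (min b (max (b + Z ω) 0) - min a (max (a + Z ω) 0)) ∂P :=
      (integral_sub (gint b) (gint a)).symm
    constructor
    · have hmono : ∀ ω, ({ω | -a < Z ω}.indicator (fun _ => b - a)) ω ≤
          min b (max (b + Z ω) 0) - min a (max (a + Z ω) 0) := by
        intro ω
        rw [Set.indicator_apply]
        exact psi_lower a b (Z ω) ha hab
      have := integral_mono ((integrable_const (b - a)).indicator hAa)
        ((gint b).sub (gint a)) hmono
      rw [integral_indicator_const (b - a) hAa, smul_eq_mul] at this
      rw [hdiff]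
      calc (b - a) * h a = (P {ω | -a < Z ω}).toReal * (b - a) := by ring
        _ ≤ _ := this
    · have hmono : ∀ ω, min b (max (b + Z ω) 0) - min a (max (a + Z ω) 0) ≤
          ({ω | -b < Z ω}.indicator (fun _ => b - a)) ω := by
        intro ω
        rw [Set.indicator_apply]
        exact psi_upper a b (Z ω) ha hab
      have := integral_mono ((gint b).sub (gint a))
        ((integrable_const (b - a)).indicator hAb) hmono
      rw [integral_indicator_const (b - a) hAb, smul_eq_mul] at this
      rw [hdiff]
      calc ∫ ω, (min b (max (b + Z ω) 0) - min a (max (a + Z ω) 0)) ∂P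
          ≤ (P {ω | -b < Z ω}).toReal * (b - a) := this
        _ = (b - a) * h b := by ring
  intro x hx
  rw [hasDerivAt_iff_tendsto_slope]
  have hLlim : Tendsto (fun y => min (h x) (h y)) (𝓝[≠] x) (𝓝 (h x)) := by
    have : Tendsto (fun y => min (h x) (h y)) (𝓝 x) (𝓝 (min (h x) (h x))) :=
      tendsto_const_nhds.min (hcont x)
    rw [min_self] at this
    exact this.mono_left nhdsWithin_le_nhds
  have hUlim : Tendsto (fun y => max (h x) (h y)) (𝓝[≠] x) (𝓝 (h x)) := by
    have : Tendsto (fun y => max (h x) (h y)) (𝓝 x) (𝓝 (max (h x) (h x))) :=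
      tendsto_const_nhds.max (hcont x)
    rw [max_self] at this
    exact this.mono_left nhdsWithin_le_nhds
  refine tendsto_of_tendsto_of_tendsto_of_le_of_le' hLlim hUlim ?_ ?_
  · filter_upwards [eventually_nhdsWithin_of_eventually_nhds (eventually_gt_nhds hx),
      self_mem_nhdsWithin] with y hy0 hyx
    rcases lt_or_gt_of_ne (Ne.symm hyx) with hlt | hgt
    · -- x < y : slope ∈ [h x, h y]
      have hb := hbound x y hx hlt.le
      rw [slope_def_field]
      have hyx' : 0 < y - x := by linarith
      refine (min_le_left _ _).trans ?_
      rw [le_div_iff₀ hyx']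
      linarith [hb.1]
    · -- y < x : slope ∈ [h y, h x]
      have hb := hbound y x hy0 hgt.le
      rw [slope_comm, slope_def_field]
      have hxy' : 0 < x - y := by linarith
      refine (min_le_right _ _).trans ?_
      rw [le_div_iff₀ hxy']
      linarith [hb.1]
  · filter_upwards [eventually_nhdsWithin_of_eventually_nhds (eventually_gt_nhds hx),
      self_mem_nhdsWithin] with y hy0 hyx
    rcases lt_or_gt_of_ne (Ne.symm hyx) with hlt | hgt
    · have hb := hbound x y hx hlt.le
      rw [slope_def_field]
      have hyx' : 0 < y - x := by linarith
      refine le_trans ?_ (le_max_right _ _)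
      rw [div_le_iff₀ hyx']
      linarith [hb.2]
    · have hb := hbound y x hy0 hgt.le
      rw [slope_comm, slope_def_field]
      have hxy' : 0 < x - y := by linarith
      refine le_trans ?_ (le_max_left _ _)
      rw [div_le_iff₀ hxy']
      linarith [hb.2]
end

section
/- Let Z be an integrable real random variable whose law has no atoms, i.e. P[Z = z₀] = 0 for every z₀ ∈ ℝ. For x ≤ 0 define ψ⁻ₓ(y) := −max{x, min{y, 0}} and E(x) := E[ψ⁻ₓ(x + Z)]. Then E is differentiable at every x < 0 with E'(x) = −P[Z ≤ −x]. -/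
open MeasureTheory ProbabilityTheory Filter

/-! For each `z`, the map `y ↦ ψ⁻_y(y + z) = -max{y, min{y + z, 0}}` is 1-Lipschitz, bounded by
`|y|`, and near `x < 0` it equals `-(y + max{0, z})` if `z < -x` and `0` if `z > -x`. Its derivative
at `x` is therefore `-1_{z ≤ -x}` except at the single point `z = -x`, which `Z` hits with
probability zero, so differentiation under the integral (dominated by the constant Lipschitz
bound 1) gives `E'(x) = -P[Z ≤ -x]`. -/

lemma lipschitzWith_neg_max_min_add (z : ℝ) :
    LipschitzWith 1 fun y : ℝ => -(max y (min (y + z) 0)) := by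
  have hmax := LipschitzWith.id.max ((isometry_add_right z).lipschitz.min ((LipschitzWith.const (0 : ℝ)).weaken zero_le_one))
  rw [max_self, max_self] at hmax
  exact hmax.neg

lemma abs_max_min_add_le {x : ℝ} (hx : x ≤ 0) (z : ℝ) : |max x (min (x + z) 0)| ≤ -x := by
  have hlow : x ≤ max x (min (x + z) 0) := le_max_left _ _
  have hupp : max x (min (x + z) 0) ≤ 0 := max_le hx (min_le_right _ _)
  rw [abs_le]
  constructor <;> linarith

lemma hasDerivAt_neg_max_min_add {x z : ℝ} (hx : x < 0) (hz : z ≠ -x) :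
    HasDerivAt (fun y : ℝ => -(max y (min (y + z) 0))) (if z ≤ -x then -1 else 0) x := by
  rcases hz.lt_or_gt with hlt | hgt
  · rw [if_pos hlt.le]
    refine (((hasDerivAt_id' x).add_const (max 0 z)).neg).congr_of_eventuallyEq ?_
    filter_upwards [Iio_mem_nhds (show x < -z by linarith)] with y hy
    show -max y (min (y + z) 0) = -(y + max 0 z)
    rw [min_eq_left (by linarith [Set.mem_Iio.mp hy]), ← max_add_add_left, add_zero]
  · rw [if_neg hgt.not_ge]
    refine (hasDerivAt_const x (0 : ℝ)).congr_of_eventuallyEq ?_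
    filter_upwards [Iio_mem_nhds hx, Ioi_mem_nhds (show -z < x by linarith)] with y hy hyz
    have hpos : 0 < y + z := by linarith [Set.mem_Ioi.mp hyz]
    rw [min_eq_right hpos.le, max_eq_right (Set.mem_Iio.mp hy).le, neg_zero]

theorem deriv_E_minus_general
    {Ω : Type*} [MeasurableSpace Ω] (P : Measure Ω) [IsProbabilityMeasure P]
    (Z : Ω → ℝ) (hZm : Measurable Z)
    (hatomless : ∀ z₀ : ℝ, P {ω | Z ω = z₀} = 0) :
    ∀ x : ℝ, x < 0 →
      HasDerivAt (fun x : ℝ => ∫ ω, -(max x (min (x + Z ω) 0)) ∂P)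
        (-(P {ω | Z ω ≤ -x}).toReal) x := by
  intro x hx
  set s : Set Ω := {ω | Z ω ≤ -x}
  have hs : MeasurableSet s := hZm measurableSet_Iic
  have hmeas (y : ℝ) : AEStronglyMeasurable (fun ω => -(max y (min (y + Z ω) 0))) P :=
    (measurable_const.max ((measurable_const.add hZm).min measurable_const)).neg.aestronglyMeasurable
  have hint : Integrable (fun ω => -(max x (min (x + Z ω) 0))) P :=
    (integrable_const (-x)).mono' (hmeas x) (.of_forall fun ω => by
      simpa using abs_max_min_add_le hx.le (Z ω))
  have hdiff : ∀ᵐ ω ∂P, HasDerivAt (fun y => -(max y (min (y + Z ω) 0)))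
      (s.indicator (fun _ => -1) ω) x := by
    have hne : ∀ᵐ ω ∂P, Z ω ≠ -x := by simpa [ae_iff] using hatomless (-x)
    filter_upwards [hne] with ω hω
    simpa [s, Set.indicator_apply] using hasDerivAt_neg_max_min_add hx hω
  have key := hasDerivAt_integral_of_dominated_loc_of_lip (bound := fun _ => 1)
    (Metric.ball_mem_nhds x one_pos) (.of_forall hmeas) hint
    ((measurable_const.indicator hs).aestronglyMeasurable)
    (.of_forall fun ω => by simpa using (lipschitzWith_neg_max_min_add (Z ω)).lipschitzOnWith)
    (integrable_const 1) hdiff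
  simpa [integral_indicator_const _ hs, Measure.real] using key.2

/-- **Differentiability of `E(x) = E[ψ⁻ₓ(x+Z)]`** (from the proof of Lemma `LemVarDen`):
for an integrable random variable `Z` with atomless law, the function
`x ↦ E[−max{x, min{x+Z, 0}}]` is differentiable at every `x < 0` with derivative
`−P[Z ≤ −x]`. -/
theorem deriv_E_minus
    {Ω : Type*} [MeasurableSpace Ω] (P : Measure Ω) [IsProbabilityMeasure P]
    (Z : Ω → ℝ) (hZm : Measurable Z) (hZ : Integrable Z P)
    (hatomless : ∀ z₀ : ℝ, P {ω | Z ω = z₀} = 0) :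
    ∀ x : ℝ, x < 0 →
      HasDerivAt (fun x : ℝ => ∫ ω, -(max x (min (x + Z ω) 0)) ∂P)
        (-(P {ω | Z ω ≤ -x}).toReal) x :=
  deriv_E_minus_general P Z hZm hatomless
end

section
/- Let Z be an integrable real random variable whose law has no atoms and which is symmetric, i.e. Z and −Z have the same law. Define E : ℝ → ℝ by E(x) := E[min{x, max{x + Z, 0}}] for x ≥ 0 and E(x) := E[−max{x, min{x + Z, 0}}] for x ≤ 0 (the two formulas agree at x = 0, both giving 0). Then the function G(x) := −|x| + 2·E(x) is differentiable on all of ℝ, and G'(x) = 2·P[Z ≤ x] − 1 for every x ∈ ℝ; in particular G is differentiable at x = 0 with G'(0) = 0. -/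
/-!
For `x ≥ 0` one has `min x (max (x + z) 0) = ∫₀ˣ 1{-z < t} dt`, so by Fubini
`E(x) = ∫₀ˣ P[-Z < t] dt`; for `x ≤ 0` the integrand is the same expression at `-x` and `-Z`.
For a symmetric atomless law both cases give `E(x) = ∫₀^{|x|} F`, with `F` the (continuous)
distribution function, which satisfies `F(-t) = 1 - F(t)`. Hence
`G(x) = ∫₀^{|x|} (2F - 1) = ∫₀ˣ (2F - 1)` because `2F - 1` is odd, and the fundamental theorem
of calculus gives `G' = 2F - 1`.
-/

open MeasureTheory ProbabilityTheory Set

lemma min_max_add_eq_intervalIntegral_indicator {x : ℝ} (hx : 0 ≤ x) (z : ℝ) :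
    min x (max (x + z) 0) = ∫ t in 0..x, (Ioi (-z)).indicator 1 t := by
  rw [intervalIntegral.integral_of_le hx, integral_indicator_one measurableSet_Ioi,
    measureReal_restrict_apply measurableSet_Ioi, inter_comm, Ioc_inter_Ioi, Real.volume_real_Ioc]
  simp only [max_def, min_def]
  split_ifs <;> linarith

variable {μ : Measure ℝ}

lemma integral_min_max_add_eq_intervalIntegral [IsFiniteMeasure μ] {x : ℝ} (hx : 0 ≤ x) :
    ∫ z, min x (max (x + z) 0) ∂μ = ∫ t in 0..x, μ.real (Ioi (-t)) := by
  have hswap (t z : ℝ) :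
      (Ioi (-z)).indicator (1 : ℝ → ℝ) t = (Ioi (-t)).indicator (1 : ℝ → ℝ) z := by
    simp only [indicator, mem_Ioi, neg_lt, Pi.one_apply]
  have hS : MeasurableSet {p : ℝ × ℝ | -p.1 < p.2} :=
    measurableSet_lt measurable_fst.neg measurable_snd
  have : IsFiniteMeasure (volume.restrict (uIoc 0 x)) :=
    isFiniteMeasure_restrict.2 measure_Ioc_lt_top.ne
  have hint : Integrable (Function.uncurry fun t z => (Ioi (-t)).indicator (1 : ℝ → ℝ) z)
      ((volume.restrict (uIoc 0 x)).prod μ) :=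
    (integrable_const (1 : ℝ)).indicator hS
  calc ∫ z, min x (max (x + z) 0) ∂μ
        = ∫ z, (∫ t in 0..x, (Ioi (-t)).indicator (1 : ℝ → ℝ) z) ∂μ := by
        congr 1 with z
        rw [min_max_add_eq_intervalIntegral_indicator hx]
        exact intervalIntegral.integral_congr fun t _ => hswap t z
    _ = ∫ t in 0..x, ∫ z, (Ioi (-t)).indicator (1 : ℝ → ℝ) z ∂μ :=
        (intervalIntegral_integral_swap hint).symm
    _ = ∫ t in 0..x, μ.real (Ioi (-t)) := by
        simp_rw [integral_indicator_one measurableSet_Ioi]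

lemma integral_neg_max_min_add_eq_intervalIntegral [IsFiniteMeasure μ] [μ.IsNegInvariant] {x : ℝ}
    (hx : x ≤ 0) :
    ∫ z, -max x (min (x + z) 0) ∂μ = ∫ t in 0..-x, μ.real (Ioi (-t)) := by
  have hpt (z : ℝ) : -max x (min (x + z) 0) = min (-x) (max (-x + -z) 0) := by
    rw [← min_neg_neg, ← max_neg_neg, neg_add, neg_zero]
  simp_rw [hpt]
  rw [integral_neg_eq_self (fun z => min (-x) (max (-x + z) 0))]
  exact integral_min_max_add_eq_intervalIntegral (neg_nonneg.2 hx)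

lemma measureReal_Ioi_neg_eq_cdf [IsProbabilityMeasure μ] [NullSingletonClass μ] [μ.IsNegInvariant]
    (t : ℝ) :
    μ.real (Ioi (-t)) = cdf μ t := by
  rw [cdf_eq_real, ← neg_Iio, measureReal_def, Measure.measure_neg, ← measureReal_def]
  exact measureReal_congr Iio_ae_eq_Iic

lemma cdf_neg [IsProbabilityMeasure μ] [NullSingletonClass μ] [μ.IsNegInvariant] (t : ℝ) :
    cdf μ (-t) = 1 - cdf μ t := by
  rw [← measureReal_Ioi_neg_eq_cdf, neg_neg, cdf_eq_real, ← compl_Iic,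
    measureReal_compl measurableSet_Iic, probReal_univ]

lemma continuous_cdf [IsProbabilityMeasure μ] [NullSingletonClass μ] : Continuous (cdf μ) := by
  refine continuous_iff_continuousAt.2 fun x => ?_
  rw [(monotone_cdf μ).continuousAt_iff_leftLim_eq_rightLim, (cdf μ).rightLim_eq]
  have h := (cdf μ).measure_singleton x
  rw [measure_cdf, measure_singleton, eq_comm, ENNReal.ofReal_eq_zero] at h
  linarith [(monotone_cdf μ).leftLim_le (le_refl x)]

lemma intervalIntegral_zero_abs_of_odd {E : Type*} [NormedAddCommGroup E] [NormedSpace ℝ E]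
    {f : ℝ → E} (hf : ∀ t, f (-t) = -f t) (x : ℝ) :
    ∫ t in 0..|x|, f t = ∫ t in 0..x, f t := by
  rcases le_total 0 x with hx | hx
  · rw [abs_of_nonneg hx]
  · calc ∫ t in 0..|x|, f t = ∫ t in x..0, f (-t) := by
          rw [abs_of_nonpos hx, intervalIntegral.integral_comp_neg, neg_zero]
      _ = ∫ t in 0..x, f t := by
          simp only [hf, intervalIntegral.integral_neg, intervalIntegral.integral_symm x]

/-- The paper's `E(x) = 𝔼[ψₓ(x + Z)]` for `Z` with law `μ`. -/
noncomputable def clipMean (μ : Measure ℝ) (x : ℝ) : ℝ :=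
  if 0 ≤ x then ∫ z, min x (max (x + z) 0) ∂μ else ∫ z, -max x (min (x + z) 0) ∂μ

lemma clipMean_eq_intervalIntegral_cdf [IsProbabilityMeasure μ] [NullSingletonClass μ]
    [μ.IsNegInvariant] (x : ℝ) : clipMean μ x = ∫ t in 0..|x|, cdf μ t := by
  simp_rw [clipMean, ← measureReal_Ioi_neg_eq_cdf]
  split_ifs with hx
  · rw [abs_of_nonneg hx, integral_min_max_add_eq_intervalIntegral hx]
  · rw [abs_of_neg (not_le.1 hx), integral_neg_max_min_add_eq_intervalIntegral (not_le.1 hx).le]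

lemma hasDerivAt_neg_abs_add_two_mul_clipMean [IsProbabilityMeasure μ] [NullSingletonClass μ]
    [μ.IsNegInvariant] (x : ℝ) :
    HasDerivAt (fun x => -|x| + 2 * clipMean μ x) (2 * cdf μ x - 1) x := by
  have hF : Continuous (cdf μ) := continuous_cdf
  have hG : (fun x => -|x| + 2 * clipMean μ x) = fun x => ∫ t in 0..x, (2 * cdf μ t - 1) := by
    funext y
    calc -|y| + 2 * clipMean μ y = ∫ t in 0..|y|, (2 * cdf μ t - 1) := by
          rw [clipMean_eq_intervalIntegral_cdf, intervalIntegral.integral_sub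
            ((hF.const_mul 2).intervalIntegrable _ _) intervalIntegrable_const,
            intervalIntegral.integral_const_mul, intervalIntegral.integral_const, smul_eq_mul]
          ring
      _ = ∫ t in 0..y, (2 * cdf μ t - 1) :=
          intervalIntegral_zero_abs_of_odd (fun t => by rw [cdf_neg]; ring) y
  rw [hG]
  exact (((continuous_const.mul hF).sub continuous_const).integral_hasStrictDerivAt 0 x).hasDerivAt

lemma clipMean_map {Ω : Type*} [MeasurableSpace Ω] (P : Measure Ω) {Z : Ω → ℝ} (hZ : Measurable Z)
    (x : ℝ) :
    clipMean (P.map Z) x = if 0 ≤ x then ∫ ω, min x (max (x + Z ω) 0) ∂P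
      else ∫ ω, -max x (min (x + Z ω) 0) ∂P := by
  rw [clipMean, integral_map hZ.aemeasurable (by fun_prop),
    integral_map hZ.aemeasurable (by fun_prop)]

theorem deriv_G_eq_two_cdf_sub_one_general
    {Ω : Type*} [MeasurableSpace Ω] (P : Measure Ω) [IsProbabilityMeasure P]
    (Z : Ω → ℝ) (hZm : Measurable Z)
    (hatomless : ∀ z₀ : ℝ, P {ω | Z ω = z₀} = 0)
    (hsymm : Measure.map Z P = Measure.map (fun ω => -(Z ω)) P) :
    ∀ x : ℝ,
      HasDerivAt (fun x : ℝ => -|x| + 2 *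
          (if 0 ≤ x then ∫ ω, min x (max (x + Z ω) 0) ∂P
           else ∫ ω, -(max x (min (x + Z ω) 0)) ∂P))
        (2 * (P {ω | Z ω ≤ x}).toReal - 1) x := by
  intro x
  have : IsProbabilityMeasure (P.map Z) := Measure.isProbabilityMeasure_map hZm.aemeasurable
  have : (P.map Z).IsNegInvariant :=
    ⟨by rw [Measure.neg, Measure.map_map measurable_neg hZm]; exact hsymm.symm⟩
  have : NullSingletonClass (P.map Z) :=
    ⟨fun z => by rw [Measure.map_apply hZm (measurableSet_singleton z)]; exact hatomless z⟩
  have hcdf : cdf (P.map Z) x = (P {ω | Z ω ≤ x}).toReal := by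
    rw [cdf_eq_real, map_measureReal_apply hZm measurableSet_Iic]; rfl
  simpa only [clipMean_map P hZm, hcdf] using
    hasDerivAt_neg_abs_add_two_mul_clipMean (μ := P.map Z) x

/-- **Derivative computation of Lemma `LemVarDen`**: for `Z` integrable, symmetric and
with atomless law, with `E(x) = E[min{x, max{x+Z,0}}]` for `x ≥ 0` and
`E(x) = E[−max{x, min{x+Z,0}}]` for `x ≤ 0`, the function `G(x) = −|x| + 2 E(x)` is
differentiable on all of `ℝ` with `G'(x) = 2 P[Z ≤ x] − 1`. -/
theorem deriv_G_eq_two_cdf_sub_one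
    {Ω : Type*} [MeasurableSpace Ω] (P : Measure Ω) [IsProbabilityMeasure P]
    (Z : Ω → ℝ) (hZm : Measurable Z) (hZ : Integrable Z P)
    (hatomless : ∀ z₀ : ℝ, P {ω | Z ω = z₀} = 0)
    (hsymm : Measure.map Z P = Measure.map (fun ω => -(Z ω)) P) :
    ∀ x : ℝ,
      HasDerivAt (fun x : ℝ => -|x| + 2 *
          (if 0 ≤ x then ∫ ω, min x (max (x + Z ω) 0) ∂P
           else ∫ ω, -(max x (min (x + Z ω) 0)) ∂P))
        (2 * (P {ω | Z ω ≤ x}).toReal - 1) x :=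
  deriv_G_eq_two_cdf_sub_one_general P Z hZm hatomless hsymm
end
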